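/- arXiv:2405.16452 — 2 statements merged into one kernel-verified Lean document; each statement's English description precedes it below -/
import Mathlib

section
/- Let G be a simple graph on n vertices and let T = T(G) be the graph on the same vertex set in which two distinct vertices x, y are adjacent if and only if they are joined by a path of length 2 in G. Then |E(T)| = |E(G)| − ⌊n/2⌋ holds if and only if one of the following is the case: (L1) n is even and G is a vertex-disjoint union of balanced complete bipartite graphs K_{d_i,d_i} with d_i ≥ 1 whose sizes sum appropriately (∑ d_i = n/2); (L2) n is odd and G is as in (L1) except that exactly one component is either a complete bipartite graph K_{d,d+1} or an isolated vertex. -/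
/-- A triple system: a family of 3-element subsets of the vertex type. -/
def isTripleSystem {V : Type*} (F : Finset (Finset V)) : Prop :=
  ∀ t ∈ F, t.card = 3

/-- `F` contains the configuration described by `pattern` (a list of triples on `Fin m`)
if there is an injection of `Fin m` into the vertex set mapping each triple of the
pattern to a member of `F`. -/
def containsConfig {V : Type*} [DecidableEq V] {m : ℕ}
    (F : Finset (Finset V)) (pattern : List (Finset (Fin m))) : Prop :=
  ∃ f : Fin m → V, Function.Injective f ∧ ∀ t ∈ pattern, t.image f ∈ F

/-- Configuration A: triples {1,2,4},{1,3,5},{2,3,6} on 6 vertices (0-indexed). -/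
def configA : List (Finset (Fin 6)) := [{0,1,3}, {0,2,4}, {1,2,5}]

/-- Configuration B: triples {1,2,5},{1,3,4},{2,3,4} on 5 vertices (0-indexed). -/
def configB : List (Finset (Fin 5)) := [{0,1,4}, {0,2,3}, {1,2,3}]

/-- Configuration C: triples {1,2,4},{1,3,4},{2,3,4} on 4 vertices (0-indexed). -/
def configC : List (Finset (Fin 4)) := [{0,1,3}, {0,2,3}, {1,2,3}]

/-- Configuration D: triples {1,2,3},{1,3,4},{2,3,5} on 5 vertices (0-indexed). -/
def configD : List (Finset (Fin 5)) := [{0,1,2}, {0,2,3}, {1,2,4}]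


/-- The graph T(G): two distinct vertices are adjacent iff they are joined by a path
of length 2 in G. -/
def pathTwoGraph {V : Type*} (G : SimpleGraph V) : SimpleGraph V where
  Adj x y := x ≠ y ∧ ∃ z : V, G.Adj x z ∧ G.Adj z y
  symm := by
    constructor
    rintro x y ⟨hxy, z, h1, h2⟩
    exact ⟨hxy.symm, z, h2.symm, h1.symm⟩
  loopless := by
    constructor
    rintro x ⟨h, -⟩
    exact h rfl

/-- G is the vertex-disjoint union of the complete bipartite graphs with parts A i, B i,
these components covering all vertices. -/
def isDisjointUnionCompleteBipartite {V : Type*} [DecidableEq V] {r : ℕ}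
    (G : SimpleGraph V) (A B : Fin r → Finset V) : Prop :=
  (∀ i, Disjoint (A i) (B i)) ∧
  (∀ i j, i ≠ j → Disjoint (A i ∪ B i) (A j ∪ B j)) ∧
  (∀ v : V, ∃ i, v ∈ A i ∪ B i) ∧
  (∀ x y : V, G.Adj x y ↔ ∃ i, (x ∈ A i ∧ y ∈ B i) ∨ (x ∈ B i ∧ y ∈ A i))


/-!
Deleting both ends of an edge `uv` removes `deg u + deg v - 1` edges of `G` and at least
`deg u + deg v - 2` edges of `T(G)`: besides the edges of `T(G - u - v)`, `T(G)` contains the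
distinct edges `ux` (`x ∈ N(v)`) and `vy` (`y ∈ N(u)`). Induction gives
`|E(G)| ≤ |E(T(G))| + ⌊n/2⌋`. In the equality case every such step is tight, so each
`T`-neighbour of `u` is a neighbour of `v`: every walk of length three joins adjacent vertices.
Such a graph is a disjoint union of complete bipartite graphs `K_{a_i,b_i}` with `a_i ≤ b_i`
(an isolated vertex being `K_{0,1}`). Summing degrees,
`2|E(T)| + 2∑ a_i = 2|E(G)| + ∑ k_i (k_i - 1)` with `k_i = b_i - a_i`, while
`n = 2∑ a_i + ∑ k_i`; hence equality holds iff `∑ k_i ≤ 1`.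
-/

open Finset SimpleGraph

instance {V : Type*} [Fintype V] [DecidableEq V] (G : SimpleGraph V) [DecidableRel G.Adj] :
    DecidableRel (pathTwoGraph G).Adj :=
  fun x y => inferInstanceAs (Decidable (x ≠ y ∧ ∃ z, G.Adj x z ∧ G.Adj z y))

lemma pathTwoGraph_mono {V : Type*} {G H : SimpleGraph V} (h : G ≤ H) :
    pathTwoGraph G ≤ pathTwoGraph H :=
  fun _ _ ⟨hxy, z, hxz, hzy⟩ => ⟨hxy, z, h hxz, h hzy⟩

lemma notMem_of_mem_edgeSet_pathTwoGraph {V : Type*} {G : SimpleGraph V} {u : V}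
    (hu : ∀ w, ¬G.Adj u w) {e : Sym2 V} (he : e ∈ (pathTwoGraph G).edgeSet) : u ∉ e := by
  induction e using Sym2.ind with
  | _ x y =>
    obtain ⟨-, z, hxz, hzy⟩ := he
    rw [Sym2.mem_iff]
    rintro (rfl | rfl)
    · exact hu z hxz
    · exact hu z hzy.symm

namespace SimpleGraph

variable {V : Type*} {G : SimpleGraph V} {u v x y : V}

lemma deleteIncidenceSet_deleteIncidenceSet_adj :
    ((G.deleteIncidenceSet u).deleteIncidenceSet v).Adj x y ↔
      G.Adj x y ∧ x ≠ u ∧ y ≠ u ∧ x ≠ v ∧ y ≠ v := by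
  simp only [deleteIncidenceSet_adj, and_assoc]

lemma not_deleteIncidenceSet_deleteIncidenceSet_adj_left :
    ¬((G.deleteIncidenceSet u).deleteIncidenceSet v).Adj u x := by
  simp [deleteIncidenceSet_deleteIncidenceSet_adj]

lemma not_deleteIncidenceSet_deleteIncidenceSet_adj_right :
    ¬((G.deleteIncidenceSet u).deleteIncidenceSet v).Adj v x := by
  simp [deleteIncidenceSet_deleteIncidenceSet_adj]

lemma mem_erase_erase_of_deleteIncidenceSet_deleteIncidenceSet_adj [DecidableEq V] {s : Finset V}
    (hs : ∀ x y, G.Adj x y → x ∈ s)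
    (h : ((G.deleteIncidenceSet u).deleteIncidenceSet v).Adj x y) : x ∈ (s.erase u).erase v := by
  rw [deleteIncidenceSet_deleteIncidenceSet_adj] at h
  exact mem_erase.2 ⟨h.2.2.2.1, mem_erase.2 ⟨h.2.1, hs x y h.1⟩⟩

variable [Fintype V] [DecidableEq V] [DecidableRel G.Adj]

lemma degree_deleteIncidenceSet_add_one (h : G.Adj u v) :
    (G.deleteIncidenceSet u).degree v + 1 = G.degree v := by
  have : (G.deleteIncidenceSet u).neighborFinset v = (G.neighborFinset v).erase u := by
    ext w
    simp [deleteIncidenceSet_adj, h.ne', and_comm]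
  rw [← card_neighborFinset_eq_degree, ← card_neighborFinset_eq_degree, this,
    card_erase_add_one (by simpa using h.symm)]

lemma card_edgeFinset_deleteIncidenceSet_add_degree (x : V) :
    #(G.deleteIncidenceSet x).edgeFinset + G.degree x = #G.edgeFinset := by
  rw [edgeFinset_deleteIncidenceSet_eq_sdiff, ← card_incidenceFinset_eq_degree,
    card_sdiff_add_card_eq_card (G.incidenceFinset_subset x)]

lemma card_edgeFinset_deleteIncidenceSet_deleteIncidenceSet_add (h : G.Adj u v) :
    #((G.deleteIncidenceSet u).deleteIncidenceSet v).edgeFinset + G.degree u + G.degree v =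
      #G.edgeFinset + 1 := by
  have hu := G.card_edgeFinset_deleteIncidenceSet_add_degree u
  have hv := (G.deleteIncidenceSet u).card_edgeFinset_deleteIncidenceSet_add_degree v
  have hdeg := degree_deleteIncidenceSet_add_one h
  omega

end SimpleGraph

section EdgeBound

variable {V : Type*} [Fintype V] [DecidableEq V]

/-- For an edge `uv`, three pairwise disjoint families of edges of `T(G)`. -/
def pathTwoEdgesThrough (G : SimpleGraph V) [DecidableRel G.Adj] (u v : V) :
    Finset (Sym2 V) :=
  (pathTwoGraph ((G.deleteIncidenceSet u).deleteIncidenceSet v)).edgeFinset ∪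
    ((G.neighborFinset v).erase u).image (fun x => s(u, x)) ∪
    ((G.neighborFinset u).erase v).image (fun y => s(v, y))

variable {G : SimpleGraph V} [DecidableRel G.Adj] {u v : V}

lemma pathTwoEdgesThrough_subset (h : G.Adj u v) :
    pathTwoEdgesThrough G u v ⊆ (pathTwoGraph G).edgeFinset := by
  refine union_subset (union_subset ?_ ?_) ?_
  · exact edgeFinset_mono (pathTwoGraph_mono
      ((deleteIncidenceSet_le _ _).trans (deleteIncidenceSet_le _ _)))
  · simp only [image_subset_iff, mem_erase, mem_neighborFinset, mem_edgeFinset, mem_edgeSet]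
    exact fun x ⟨hxu, hvx⟩ => ⟨hxu.symm, v, h, hvx⟩
  · simp only [image_subset_iff, mem_erase, mem_neighborFinset, mem_edgeFinset, mem_edgeSet]
    exact fun y ⟨hyv, huy⟩ => ⟨hyv.symm, u, h.symm, huy⟩

lemma card_pathTwoEdgesThrough (h : G.Adj u v) :
    #(pathTwoEdgesThrough G u v) + 2 =
      #(pathTwoGraph ((G.deleteIncidenceSet u).deleteIncidenceSet v)).edgeFinset +
        G.degree u + G.degree v := by
  have hdisj₁ : Disjoint
      (pathTwoGraph ((G.deleteIncidenceSet u).deleteIncidenceSet v)).edgeFinset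
      (((G.neighborFinset v).erase u).image (fun x => s(u, x))) := by
    simp only [disjoint_right, mem_image, mem_edgeFinset]
    rintro _ ⟨x, -, rfl⟩ he
    exact notMem_of_mem_edgeSet_pathTwoGraph
      (fun _ => not_deleteIncidenceSet_deleteIncidenceSet_adj_left) he (Sym2.mem_mk_left u x)
  have hdisj₂ : Disjoint
      ((pathTwoGraph ((G.deleteIncidenceSet u).deleteIncidenceSet v)).edgeFinset ∪
      ((G.neighborFinset v).erase u).image (fun x => s(u, x)))
      (((G.neighborFinset u).erase v).image (fun y => s(v, y))) := by
    simp only [disjoint_right, mem_union, mem_image, mem_edgeFinset, mem_erase, mem_neighborFinset]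
    rintro _ ⟨y, ⟨-, huy⟩, rfl⟩ (he | ⟨x, ⟨-, hvx⟩, he⟩)
    · exact notMem_of_mem_edgeSet_pathTwoGraph
        (fun _ => not_deleteIncidenceSet_deleteIncidenceSet_adj_right) he (Sym2.mem_mk_left v y)
    · rcases Sym2.eq_iff.1 he with ⟨huv, -⟩ | ⟨rfl, rfl⟩
      · exact h.ne huv
      · exact G.loopless.irrefl _ huy
  have hinj : ∀ a : V, Function.Injective (fun x => s(a, x)) := fun _ _ _ => Sym2.congr_right.1
  have hdu := card_erase_add_one (show v ∈ G.neighborFinset u by simpa using h)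
  have hdv := card_erase_add_one (show u ∈ G.neighborFinset v by simpa using h.symm)
  rw [card_neighborFinset_eq_degree] at hdu hdv
  rw [pathTwoEdgesThrough, card_union_of_disjoint hdisj₂, card_union_of_disjoint hdisj₁,
    card_image_of_injective _ (hinj u), card_image_of_injective _ (hinj v)]
  omega

theorem card_edgeFinset_le_card_edgeFinset_pathTwoGraph_add (s : Finset V)
    (hs : ∀ x y, G.Adj x y → x ∈ s) :
    #G.edgeFinset ≤ #(pathTwoGraph G).edgeFinset + #s / 2 := by
  induction s using Finset.strongInduction generalizing G with
  | H s ih =>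
    rcases G.edgeFinset.eq_empty_or_nonempty with hE | ⟨e, he⟩
    · simp [hE]
    induction e using Sym2.ind with
    | _ u v =>
    rw [mem_edgeFinset, mem_edgeSet] at he
    have hvs : v ∈ s.erase u := mem_erase.2 ⟨he.ne', hs v u he.symm⟩
    have hcard : #((s.erase u).erase v) + 2 = #s := by
      rw [← card_erase_add_one (hs u v he), ← card_erase_add_one hvs]
    have hsub : (s.erase u).erase v ⊂ s :=
      (erase_ssubset hvs).trans (erase_ssubset (hs u v he))
    have hIH := ih _ hsub (G := (G.deleteIncidenceSet u).deleteIncidenceSet v) fun _ _ =>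
      mem_erase_erase_of_deleteIncidenceSet_deleteIncidenceSet_adj hs
    have hE := card_edgeFinset_deleteIncidenceSet_deleteIncidenceSet_add he
    have hT := card_pathTwoEdgesThrough he
    have hsubT := card_le_card (pathTwoEdgesThrough_subset he)
    omega

/-- In the equality case the induction step of the bound is tight for every edge `uv`, so
`pathTwoEdgesThrough G u v` exhausts `T(G)`. -/
theorem adj_of_pathTwoGraph_adj_of_card_eq
    (heq : #(pathTwoGraph G).edgeFinset + Fintype.card V / 2 = #G.edgeFinset)
    (huv : G.Adj u v) {x : V} (hux : (pathTwoGraph G).Adj u x) : G.Adj v x := by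
  have hvs : v ∈ univ.erase u := mem_erase.2 ⟨huv.ne', mem_univ v⟩
  have hcard : #((univ.erase u).erase v) + 2 = Fintype.card V := by
    rw [← card_univ, ← card_erase_add_one (mem_univ u), ← card_erase_add_one hvs]
  have hle := card_edgeFinset_le_card_edgeFinset_pathTwoGraph_add
    (G := (G.deleteIncidenceSet u).deleteIncidenceSet v) ((univ.erase u).erase v)
    fun _ _ => mem_erase_erase_of_deleteIncidenceSet_deleteIncidenceSet_adj fun x _ _ => mem_univ x
  have hE := card_edgeFinset_deleteIncidenceSet_deleteIncidenceSet_add huv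
  have hT := card_pathTwoEdgesThrough huv
  have hL : pathTwoEdgesThrough G u v = (pathTwoGraph G).edgeFinset :=
    eq_of_subset_of_card_le (pathTwoEdgesThrough_subset huv) (by omega)
  have hmem : s(u, x) ∈ pathTwoEdgesThrough G u v := hL ▸ mem_edgeFinset.2 hux
  simp only [pathTwoEdgesThrough, mem_union, mem_image, mem_erase, mem_neighborFinset,
    mem_edgeFinset] at hmem
  rcases hmem with (hmem | ⟨y, ⟨-, hvy⟩, hyx⟩) | ⟨y, ⟨-, huy⟩, hyx⟩
  · exact absurd (Sym2.mem_mk_left u x) (notMem_of_mem_edgeSet_pathTwoGraph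
      (fun _ => not_deleteIncidenceSet_deleteIncidenceSet_adj_left) hmem)
  · rwa [← Sym2.congr_right.1 hyx]
  · rcases Sym2.eq_iff.1 hyx with ⟨hvu, -⟩ | ⟨-, hyu⟩
    · exact absurd hvu huv.ne'
    · exact absurd hyu.symm huy.ne

end EdgeBound

namespace isDisjointUnionCompleteBipartite

variable {V : Type*} [DecidableEq V] {G : SimpleGraph V} {r : ℕ} {A B : Fin r → Finset V}
  {i j : Fin r} {x : V}

theorem of_forall_eq_or_swap (hd : isDisjointUnionCompleteBipartite G A B)
    {A' B' : Fin r → Finset V}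
    (h : ∀ i, (A' i = A i ∧ B' i = B i) ∨ (A' i = B i ∧ B' i = A i)) :
    isDisjointUnionCompleteBipartite G A' B' := by
  obtain ⟨hAB, hcomp, hcover, hadj⟩ := hd
  have hunion : ∀ i, A' i ∪ B' i = A i ∪ B i := fun i => by
    rcases h i with ⟨h₁, h₂⟩ | ⟨h₁, h₂⟩ <;> rw [h₁, h₂]
    exact union_comm _ _
  refine ⟨fun i => ?_, fun i j hij => ?_, fun v => ?_, fun x y => ?_⟩
  · rcases h i with ⟨h₁, h₂⟩ | ⟨h₁, h₂⟩ <;> rw [h₁, h₂]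
    exacts [hAB i, (hAB i).symm]
  · rw [hunion, hunion]
    exact hcomp i j hij
  · simpa only [hunion] using hcover v
  · rw [hadj]
    refine exists_congr fun i => ?_
    rcases h i with ⟨h₁, h₂⟩ | ⟨h₁, h₂⟩ <;> rw [h₁, h₂]
    exact or_comm

theorem symm (hd : isDisjointUnionCompleteBipartite G A B) :
    isDisjointUnionCompleteBipartite G B A :=
  hd.of_forall_eq_or_swap fun _ => Or.inr ⟨rfl, rfl⟩

theorem exists_card_eq_min_max (hd : isDisjointUnionCompleteBipartite G A B) :
    ∃ A' B' : Fin r → Finset V, isDisjointUnionCompleteBipartite G A' B' ∧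
      ∀ i, #(A' i) = min #(A i) #(B i) ∧ #(B' i) = max #(A i) #(B i) := by
  refine ⟨fun i => if #(A i) ≤ #(B i) then A i else B i,
    fun i => if #(A i) ≤ #(B i) then B i else A i, hd.of_forall_eq_or_swap fun i => ?_,
    fun i => ?_⟩
  · split_ifs
    exacts [Or.inl ⟨rfl, rfl⟩, Or.inr ⟨rfl, rfl⟩]
  · dsimp only
    split_ifs <;> constructor <;> omega

theorem eq_of_mem_of_mem (hd : isDisjointUnionCompleteBipartite G A B)
    (hi : x ∈ A i ∪ B i) (hj : x ∈ A j ∪ B j) : i = j := by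
  by_contra hij
  exact Finset.disjoint_left.1 (hd.2.1 i j hij) hi hj

end isDisjointUnionCompleteBipartite

namespace SimpleGraph

variable {V : Type*} {G : SimpleGraph V}

/-- The disjoint unions of complete bipartite graphs are exactly the graphs with this
property. -/
def ThreeStepClosed (G : SimpleGraph V) : Prop :=
  ∀ ⦃a b c d : V⦄, G.Adj a b → G.Adj b c → G.Adj c d → G.Adj a d

theorem threeStepClosed_of_card_eq [Fintype V] [DecidableEq V] [DecidableRel G.Adj]
    (heq : #(pathTwoGraph G).edgeFinset + Fintype.card V / 2 = #G.edgeFinset) :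
    G.ThreeStepClosed := by
  intro a b c d hab hbc hcd
  by_cases hbd : b = d
  · exact hbd ▸ hab
  · exact adj_of_pathTwoGraph_adj_of_card_eq heq hab.symm ⟨hbd, c, hbc, hcd⟩

namespace ThreeStepClosed

variable (hG : G.ThreeStepClosed) {v x y : V}
include hG

lemma eq_or_adj_or_exists_of_reachable (h : G.Reachable x y) :
    x = y ∨ G.Adj x y ∨ ∃ z, G.Adj x z ∧ G.Adj z y := by
  obtain ⟨p⟩ := h
  induction p with
  | nil => exact Or.inl rfl
  | cons hxw _ ih =>
    rcases ih with rfl | hwy | ⟨z, hwz, hzy⟩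
    · exact Or.inr (Or.inl hxw)
    · exact Or.inr (Or.inr ⟨_, hxw, hwy⟩)
    · exact Or.inr (Or.inl (hG hxw hwz hzy))

lemma adj_of_adj_of_not_adj (hvx : G.Adj v x) (hvy : ¬G.Adj v y) (hr : G.Reachable v y) :
    G.Adj x y := by
  rcases hG.eq_or_adj_or_exists_of_reachable hr with rfl | hvy' | ⟨z, hvz, hzy⟩
  · exact hvx.symm
  · exact absurd hvy' hvy
  · exact hG hvx.symm hvz hzy

lemma adj_iff_not_adj_of_adj (hxy : G.Adj x y) (hr : G.Reachable v x) :
    G.Adj v x ↔ ¬G.Adj v y := by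
  refine ⟨fun hvx hvy => G.loopless.irrefl v (hG hvx hxy hvy.symm), fun hvy => ?_⟩
  rcases hG.eq_or_adj_or_exists_of_reachable hr with rfl | hvx | ⟨z, hvz, hzx⟩
  · exact absurd hxy hvy
  · exact hvx
  · exact absurd (hG hvz hzx hxy) hvy

lemma adj_iff (hr : G.Reachable v x) :
    G.Adj x y ↔ G.Reachable x y ∧ (G.Adj v x ↔ ¬G.Adj v y) := by
  refine ⟨fun hxy => ⟨hxy.reachable, hG.adj_iff_not_adj_of_adj hxy hr⟩,
    fun ⟨hxy, hiff⟩ => ?_⟩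
  by_cases hvx : G.Adj v x
  · exact hG.adj_of_adj_of_not_adj hvx (hiff.1 hvx) (hr.trans hxy)
  · exact (hG.adj_of_adj_of_not_adj (not_not.1 (mt hiff.2 hvx)) hvx hr).symm

end ThreeStepClosed

namespace ConnectedComponent

lemma connectedComponentMk_out (c : G.ConnectedComponent) : G.connectedComponentMk c.out = c :=
  Quot.out_eq c

variable [Fintype V] (c : G.ConnectedComponent) {w : V}

open Classical in
/-- In a three-step-closed graph these are the two sides of the component `c`. -/
noncomputable def outNeighbors : Finset V :=
  {w | G.connectedComponentMk w = c ∧ G.Adj c.out w}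

open Classical in
noncomputable def outNonNeighbors : Finset V :=
  {w | G.connectedComponentMk w = c ∧ ¬G.Adj c.out w}

@[simp] lemma mem_outNeighbors :
    w ∈ c.outNeighbors ↔ G.connectedComponentMk w = c ∧ G.Adj c.out w := by
  simp [outNeighbors]

@[simp] lemma mem_outNonNeighbors :
    w ∈ c.outNonNeighbors ↔ G.connectedComponentMk w = c ∧ ¬G.Adj c.out w := by
  simp [outNonNeighbors]

lemma mem_outNeighbors_union_outNonNeighbors [DecidableEq V] :
    w ∈ c.outNeighbors ∪ c.outNonNeighbors ↔ G.connectedComponentMk w = c := by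
  simp only [mem_union, mem_outNeighbors, mem_outNonNeighbors]
  tauto

lemma disjoint_outNeighbors_outNonNeighbors : Disjoint c.outNeighbors c.outNonNeighbors :=
  Finset.disjoint_left.2 fun _ h₁ h₂ =>
    (c.mem_outNonNeighbors.1 h₂).2 (c.mem_outNeighbors.1 h₁).2

lemma out_mem_outNonNeighbors : c.out ∈ c.outNonNeighbors := by
  simp [connectedComponentMk_out]

end ConnectedComponent

namespace ThreeStepClosed

variable (hG : G.ThreeStepClosed) [Fintype V] {x y : V}
include hG

lemma adj_iff_of_connectedComponentMk_eq {c : G.ConnectedComponent}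
    (hx : G.connectedComponentMk x = c) :
    G.Adj x y ↔ (x ∈ c.outNeighbors ∧ y ∈ c.outNonNeighbors) ∨
      (x ∈ c.outNonNeighbors ∧ y ∈ c.outNeighbors) := by
  rw [hG.adj_iff (ConnectedComponent.exact (c.connectedComponentMk_out.trans hx.symm))]
  simp only [ConnectedComponent.mem_outNeighbors, ConnectedComponent.mem_outNonNeighbors]
  constructor
  · rintro ⟨hxy, hiff⟩
    have hy : G.connectedComponentMk y = c := (ConnectedComponent.sound hxy).symm.trans hx
    tauto
  · rintro (⟨⟨hx, hvx⟩, hy, hvy⟩ | ⟨⟨hx, hvx⟩, hy, hvy⟩) <;>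
      exact ⟨ConnectedComponent.exact (hx.trans hy.symm), by tauto⟩

lemma card_outNeighbors_outNonNeighbors (c : G.ConnectedComponent) :
    (1 ≤ #c.outNeighbors ∧ 1 ≤ #c.outNonNeighbors) ∨
      #c.outNeighbors + #c.outNonNeighbors = 1 := by
  rcases c.outNeighbors.eq_empty_or_nonempty with hA | hA
  · have hisol : ∀ w, ¬G.Adj c.out w := fun w hw => (eq_empty_iff_forall_notMem.1 hA) w
      (by simp [hw, ← ConnectedComponent.sound hw.reachable, c.connectedComponentMk_out])
    have hB : c.outNonNeighbors = {c.out} := by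
      refine eq_singleton_iff_unique_mem.2 ⟨c.out_mem_outNonNeighbors, fun w hw => ?_⟩
      have hr : G.Reachable c.out w := ConnectedComponent.exact
        (c.connectedComponentMk_out.trans (c.mem_outNonNeighbors.1 hw).1.symm)
      rcases hG.eq_or_adj_or_exists_of_reachable hr with h | h | ⟨z, h, -⟩
      · exact h.symm
      · exact absurd h (hisol w)
      · exact absurd h (hisol z)
    simp [hA, hB]
  · exact Or.inl ⟨hA.card_pos, card_pos.2 ⟨_, c.out_mem_outNonNeighbors⟩⟩

theorem exists_isDisjointUnionCompleteBipartite [DecidableEq V] :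
    ∃ (r : ℕ) (A B : Fin r → Finset V), isDisjointUnionCompleteBipartite G A B ∧
      ∀ i, (1 ≤ #(A i) ∧ 1 ≤ #(B i)) ∨ #(A i) + #(B i) = 1 := by
  classical
  let e := (Fintype.equivFin G.ConnectedComponent).symm
  refine ⟨_, fun i => (e i).outNeighbors, fun i => (e i).outNonNeighbors,
    ⟨fun i => (e i).disjoint_outNeighbors_outNonNeighbors, fun i j hij => ?_, fun w => ?_,
      fun x y => ?_⟩, fun i => hG.card_outNeighbors_outNonNeighbors (e i)⟩
  · refine Finset.disjoint_left.2 fun w hi hj => hij (e.injective ?_)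
    rw [← (e i).mem_outNeighbors_union_outNonNeighbors.1 hi,
      ← (e j).mem_outNeighbors_union_outNonNeighbors.1 hj]
  · exact ⟨e.symm (G.connectedComponentMk w),
      (ConnectedComponent.mem_outNeighbors_union_outNonNeighbors _).2
        (e.apply_symm_apply _).symm⟩
  · refine ⟨fun hxy => ⟨e.symm (G.connectedComponentMk x),
      (hG.adj_iff_of_connectedComponentMk_eq (e.apply_symm_apply _).symm).1 hxy⟩,
      fun ⟨j, hj⟩ => (hG.adj_iff_of_connectedComponentMk_eq ?_).2 hj⟩
    refine (e j).mem_outNeighbors_union_outNonNeighbors.1 ?_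
    rcases hj with ⟨hx, -⟩ | ⟨hx, -⟩
    · exact mem_union_left _ hx
    · exact mem_union_right _ hx

theorem exists_isDisjointUnionCompleteBipartite_card_le [DecidableEq V] :
    ∃ (r : ℕ) (A B : Fin r → Finset V), isDisjointUnionCompleteBipartite G A B ∧
      ∀ i, #(A i) ≤ #(B i) ∧ (1 ≤ #(A i) ∨ #(B i) = 1) := by
  obtain ⟨r, A, B, hd, hconn⟩ := hG.exists_isDisjointUnionCompleteBipartite
  obtain ⟨A', B', hd', hcard⟩ := hd.exists_card_eq_min_max
  refine ⟨r, A', B', hd', fun i => ?_⟩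
  have := hconn i
  have := hcard i
  omega

end ThreeStepClosed

end SimpleGraph

lemma mul_sub_one_add_mul_sub_one_add_two_mul {a b : ℕ} (h : a ≤ b) :
    a * (a - 1) + b * (b - 1) + 2 * a = 2 * (a * b) + (b - a) * (b - a - 1) := by
  obtain ⟨k, rfl⟩ := Nat.exists_eq_add_of_le h
  rcases a with _ | a <;> rcases k with _ | k <;> simp <;> ring

section SumTsub

variable {ι : Type*} [Fintype ι] {a b : ι → ℕ}

lemma sum_tsub_eq_one (i₀ : ι) (hbal : ∀ i ≠ i₀, a i = b i) (hi₀ : b i₀ = a i₀ + 1) :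
    ∑ i, (b i - a i) = 1 := by
  rw [sum_eq_single i₀ (fun i _ hi => by rw [hbal i hi, Nat.sub_self]) (by simp)]
  omega

lemma forall_eq_or_exists_eq_add_one_of_sum_tsub_le_one [DecidableEq ι] (hle : ∀ i, a i ≤ b i)
    (h : ∑ i, (b i - a i) ≤ 1) :
    (∀ i, a i = b i) ∨ ∃ i₀, (∀ i ≠ i₀, a i = b i) ∧ b i₀ = a i₀ + 1 := by
  by_cases h0 : ∑ i, (b i - a i) = 0
  · exact Or.inl fun i => by
      have := (sum_eq_zero_iff.1 h0) i (mem_univ i)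
      have := hle i
      omega
  obtain ⟨i₀, -, hi₀⟩ := exists_ne_zero_of_sum_ne_zero h0
  have hsplit := add_sum_erase univ (fun i => b i - a i) (mem_univ i₀)
  refine Or.inr ⟨i₀, fun i hi => ?_, by have := hle i₀; omega⟩
  have := (sum_eq_zero_iff.1 (by omega : ∑ i ∈ univ.erase i₀, (b i - a i) = 0)) i
    (mem_erase.2 ⟨hi, mem_univ i⟩)
  have := hle i
  omega

end SumTsub


namespace isDisjointUnionCompleteBipartite

variable {V : Type*} [Fintype V] [DecidableEq V] {G : SimpleGraph V} {r : ℕ}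
  {A B : Fin r → Finset V} {i : Fin r} {x : V}

theorem neighborFinset_eq_of_mem_left [DecidableRel G.Adj]
    (hd : isDisjointUnionCompleteBipartite G A B) (hx : x ∈ A i) : G.neighborFinset x = B i := by
  ext y
  rw [SimpleGraph.mem_neighborFinset, hd.2.2.2]
  refine ⟨?_, fun hy => ⟨i, Or.inl ⟨hx, hy⟩⟩⟩
  rintro ⟨j, ⟨hxj, hy⟩ | ⟨hxj, -⟩⟩
  · rwa [hd.eq_of_mem_of_mem (mem_union_left _ hx) (mem_union_left _ hxj)]
  · obtain rfl := hd.eq_of_mem_of_mem (mem_union_left _ hx) (mem_union_right _ hxj)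
    exact absurd hxj (Finset.disjoint_left.1 (hd.1 i) hx)

theorem neighborFinset_pathTwoGraph_eq_of_mem_left [DecidableRel G.Adj]
    (hd : isDisjointUnionCompleteBipartite G A B) (hB : 2 ≤ #(A i) → (B i).Nonempty)
    (hx : x ∈ A i) : (pathTwoGraph G).neighborFinset x = (A i).erase x := by
  have hxz : ∀ z, G.Adj x z ↔ z ∈ B i := fun z => by
    rw [← SimpleGraph.mem_neighborFinset, hd.neighborFinset_eq_of_mem_left hx]
  have hzy : ∀ z ∈ B i, ∀ y, G.Adj z y ↔ y ∈ A i := fun z hz y => by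
    rw [← SimpleGraph.mem_neighborFinset, hd.symm.neighborFinset_eq_of_mem_left hz]
  ext y
  rw [SimpleGraph.mem_neighborFinset, mem_erase]
  constructor
  · rintro ⟨hxy, z, hz, hy⟩
    exact ⟨Ne.symm hxy, (hzy z ((hxz z).1 hz) y).1 hy⟩
  · rintro ⟨hyx, hy⟩
    obtain ⟨z, hz⟩ := hB (one_lt_card.2 ⟨x, hx, y, hy, Ne.symm hyx⟩)
    exact ⟨Ne.symm hyx, z, (hxz z).2 hz, (hzy z hz y).2 hy⟩

theorem sum_univ_eq (hd : isDisjointUnionCompleteBipartite G A B) {M : Type*}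
    [AddCommMonoid M] (f : V → M) :
    ∑ v, f v = ∑ i, (∑ v ∈ A i, f v + ∑ v ∈ B i, f v) := by
  have huniv : (univ : Finset V) = univ.biUnion fun i => A i ∪ B i :=
    (eq_univ_of_forall fun v => by simpa using hd.2.2.1 v).symm
  rw [huniv, sum_biUnion fun i _ j _ hij => hd.2.1 i j hij]
  exact sum_congr rfl fun i _ => sum_union (hd.1 i)

theorem card_univ_eq (hd : isDisjointUnionCompleteBipartite G A B) :
    Fintype.card V = ∑ i, (#(A i) + #(B i)) := by
  have := hd.sum_univ_eq fun _ => (1 : ℕ)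
  simpa only [sum_const, smul_eq_mul, mul_one, card_univ] using this

theorem two_mul_card_edgeFinset [DecidableRel G.Adj]
    (hd : isDisjointUnionCompleteBipartite G A B) :
    2 * #G.edgeFinset = ∑ i, 2 * (#(A i) * #(B i)) := by
  rw [← SimpleGraph.sum_degrees_eq_twice_card_edges, hd.sum_univ_eq]
  refine sum_congr rfl fun i _ => ?_
  have hdegA : ∀ x ∈ A i, G.degree x = #(B i) := fun x hx => by
    rw [← SimpleGraph.card_neighborFinset_eq_degree, hd.neighborFinset_eq_of_mem_left hx]
  have hdegB : ∀ x ∈ B i, G.degree x = #(A i) := fun x hx => by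
    rw [← SimpleGraph.card_neighborFinset_eq_degree, hd.symm.neighborFinset_eq_of_mem_left hx]
  rw [sum_congr rfl hdegA, sum_congr rfl hdegB, sum_const, sum_const, smul_eq_mul, smul_eq_mul]
  ring

theorem two_mul_card_edgeFinset_pathTwoGraph [DecidableRel G.Adj]
    (hd : isDisjointUnionCompleteBipartite G A B) (hA : ∀ i, 2 ≤ #(A i) → (B i).Nonempty)
    (hB : ∀ i, 2 ≤ #(B i) → (A i).Nonempty) :
    2 * #(pathTwoGraph G).edgeFinset = ∑ i, (#(A i) * (#(A i) - 1) + #(B i) * (#(B i) - 1)) := by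
  rw [← SimpleGraph.sum_degrees_eq_twice_card_edges, hd.sum_univ_eq]
  refine sum_congr rfl fun i _ => ?_
  have hdegA : ∀ x ∈ A i, (pathTwoGraph G).degree x = #(A i) - 1 := fun x hx => by
    rw [← SimpleGraph.card_neighborFinset_eq_degree,
      hd.neighborFinset_pathTwoGraph_eq_of_mem_left (hA i) hx, card_erase_of_mem hx]
  have hdegB : ∀ x ∈ B i, (pathTwoGraph G).degree x = #(B i) - 1 := fun x hx => by
    rw [← SimpleGraph.card_neighborFinset_eq_degree,
      hd.symm.neighborFinset_pathTwoGraph_eq_of_mem_left (hB i) hx, card_erase_of_mem hx]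
  rw [sum_congr rfl hdegA, sum_congr rfl hdegB, sum_const, sum_const, smul_eq_mul, smul_eq_mul]

theorem card_univ_eq_two_mul_add (hd : isDisjointUnionCompleteBipartite G A B)
    (hle : ∀ i, #(A i) ≤ #(B i)) :
    Fintype.card V = 2 * ∑ i, #(A i) + ∑ i, (#(B i) - #(A i)) := by
  rw [hd.card_univ_eq, mul_sum, ← sum_add_distrib]
  exact sum_congr rfl fun i _ => by have := hle i; omega

/-- `hcomp` says that each `K_{A i, B i}` is connected, with `A i` its smaller side. -/
theorem card_edgeFinset_pathTwoGraph_add_half_eq_iff [DecidableRel G.Adj]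
    (hd : isDisjointUnionCompleteBipartite G A B)
    (hcomp : ∀ i, #(A i) ≤ #(B i) ∧ (1 ≤ #(A i) ∨ #(B i) = 1)) :
    #(pathTwoGraph G).edgeFinset + Fintype.card V / 2 = #G.edgeFinset ↔
      ∑ i, (#(B i) - #(A i)) ≤ 1 := by
  have hle i := (hcomp i).1
  have hA : ∀ i, 2 ≤ #(A i) → (B i).Nonempty :=
    fun i _ => card_pos.1 (by have := hle i; omega)
  have hB : ∀ i, 2 ≤ #(B i) → (A i).Nonempty :=
    fun i _ => card_pos.1 (by have := (hcomp i).2; omega)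
  have hV := hd.card_univ_eq_two_mul_add hle
  have key : 2 * #(pathTwoGraph G).edgeFinset + 2 * ∑ i, #(A i) =
      2 * #G.edgeFinset + ∑ i, (#(B i) - #(A i)) * (#(B i) - #(A i) - 1) := by
    rw [hd.two_mul_card_edgeFinset_pathTwoGraph hA hB, hd.two_mul_card_edgeFinset, mul_sum,
      ← sum_add_distrib, ← sum_add_distrib]
    exact sum_congr rfl fun i _ => mul_sub_one_add_mul_sub_one_add_two_mul (hle i)
  refine ⟨fun h => by omega, fun h => ?_⟩
  have hzero : ∑ i, (#(B i) - #(A i)) * (#(B i) - #(A i) - 1) = 0 := by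
    refine sum_eq_zero fun i _ => ?_
    have : #(B i) - #(A i) ≤ 1 := (single_le_sum (f := fun i => #(B i) - #(A i))
      (fun _ _ => Nat.zero_le _) (mem_univ i)).trans h
    interval_cases (#(B i) - #(A i)) <;> rfl
  omega

end isDisjointUnionCompleteBipartite

/-- Equality |E(T(G))| = |E(G)| − n/2 holds iff G is a disjoint union of balanced
complete bipartite graphs (n even), or such a union with exactly one component a
K_{d,d+1} or an isolated vertex (n odd). -/
theorem pathTwo_edge_bound_eq {V : Type*} [Fintype V] [DecidableEq V] (n : ℕ)
    (hn : Fintype.card V = n) (G : SimpleGraph V) :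
    (pathTwoGraph G).edgeSet.ncard + n / 2 = G.edgeSet.ncard ↔
      ((Even n ∧ ∃ (r : ℕ) (A B : Fin r → Finset V),
        isDisjointUnionCompleteBipartite G A B ∧
        (∀ i, 1 ≤ (A i).card ∧ (A i).card = (B i).card) ∧
        ∑ i, (A i).card = n / 2) ∨
      (Odd n ∧ ∃ (r : ℕ) (A B : Fin r → Finset V) (i₀ : Fin r),
        isDisjointUnionCompleteBipartite G A B ∧
        (∀ i, i ≠ i₀ → 1 ≤ (A i).card ∧ (A i).card = (B i).card) ∧
        (B i₀).card = (A i₀).card + 1)) := by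
  classical
  subst hn
  simp only [← SimpleGraph.coe_edgeFinset, Set.ncard_coe_finset]
  constructor
  · intro h
    obtain ⟨r, A, B, hd, hcomp⟩ :=
      (SimpleGraph.threeStepClosed_of_card_eq h).exists_isDisjointUnionCompleteBipartite_card_le
    have hV := hd.card_univ_eq_two_mul_add fun i => (hcomp i).1
    have hk := (hd.card_edgeFinset_pathTwoGraph_add_half_eq_iff hcomp).1 h
    rcases forall_eq_or_exists_eq_add_one_of_sum_tsub_le_one (fun i => (hcomp i).1) hk with
      hbal | ⟨i₀, hbal, hi₀⟩
    · have h0 : ∑ i, (#(B i) - #(A i)) = 0 := sum_eq_zero fun i _ => by rw [hbal i, Nat.sub_self]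
      refine Or.inl ⟨Nat.even_iff.2 (by omega), r, A, B, hd, fun i => ⟨?_, hbal i⟩,
        by omega⟩
      have := hcomp i
      have := hbal i
      omega
    · have h1 := sum_tsub_eq_one i₀ hbal hi₀
      refine Or.inr ⟨Nat.odd_iff.2 (by omega), r, A, B, i₀, hd,
        fun i hi => ⟨?_, hbal i hi⟩, hi₀⟩
      have := hcomp i
      have := hbal i hi
      omega
  · rintro (⟨-, r, A, B, hd, hbal, -⟩ | ⟨-, r, A, B, i₀, hd, hbal, hi₀⟩)
    · refine (hd.card_edgeFinset_pathTwoGraph_add_half_eq_iff fun i =>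
        ⟨(hbal i).2.le, Or.inl (hbal i).1⟩).2 ?_
      simp [(hbal _).2]
    · refine (hd.card_edgeFinset_pathTwoGraph_add_half_eq_iff fun i => ?_).2
        (sum_tsub_eq_one i₀ (fun i hi => (hbal i hi).2) hi₀).le
      rcases eq_or_ne i i₀ with rfl | hi
      · omega
      · have := hbal i hi
        omega
end

section
/- Let G be a simple graph and let T = T(G) be the graph on the same vertex set in which two distinct vertices x, y are adjacent if and only if they are joined by a path of length 2 in G. Suppose {e_1, ..., e_ℓ} is a maximal matching of G, i.e. the e_i are pairwise disjoint edges of G and the set of vertices not covered by them is an independent set in G. Then |E(T)| ≥ |E(G)| − ℓ. -/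
/-!
Every edge of `G` outside the matching has a matched endpoint `x`, with partner `x'`, and an edge
`xy` yields the path `x' x y`, i.e. the edge `x'y` of `T(G)`. Sending `xy` to `x'y` is injective
once each edge is oriented away from the endpoint whose matching edge comes first in a fixed order
(unmatched vertices coming last): the only possible collision, between `xy` and `y'x'` for two
matching edges `xx'` and `yy'`, is ruled out because these two edges are oriented oppositely.
-/

open Function

theorem Sym2.toFinset_injective {α : Type*} [DecidableEq α] :
    Injective (Sym2.toFinset : Sym2 α → Finset α) := fun z w h =>
  SetLike.ext fun a => by rw [← Sym2.mem_toFinset, h, Sym2.mem_toFinset]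

section RankTransfer

variable {V α : Type*} [LinearOrder α] {G : SimpleGraph V} {p : V → V} {r : V → α}

/-- The value on pairs of equal rank only serves to make the map well defined on `Sym2`. -/
def rankTransfer (p : V → V) (r : V → α) : Sym2 V → Sym2 V :=
  Sym2.lift ⟨fun x y => if r x < r y then s(p x, y) else if r y < r x then s(x, p y) else s(x, y),
    fun x y => by
      rcases lt_trichotomy (r x) (r y) with h | h | h
      · simp [h, h.not_gt, Sym2.eq_swap]
      · simp [h, Sym2.eq_swap]
      · simp [h, h.not_gt, Sym2.eq_swap]⟩

theorem rankTransfer_mk_of_lt {x y : V} (h : r x < r y) : rankTransfer p r s(x, y) = s(p x, y) := by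
  simp [rankTransfer, h]

theorem Sym2.exists_eq_mk_lt_of_not_isDiag_map {z : Sym2 V} (hz : ¬(z.map r).IsDiag) :
    ∃ x y, z = s(x, y) ∧ r x < r y := by
  induction z using Sym2.ind with
  | _ x y =>
    rw [Sym2.map_mk, Sym2.mk_isDiag_iff] at hz
    rcases lt_or_gt_of_ne hz with h | h
    · exact ⟨x, y, rfl, h⟩
    · exact ⟨y, x, Sym2.eq_swap, h⟩

variable (hadj : ∀ v, p v ≠ v → G.Adj v (p v)) (hr : ∀ v, r (p v) = r v)
  (htop : ∀ v, p v = v → IsTop (r v))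
include hadj hr htop

theorem pathTwoGraph_adj_of_rank_lt {x y : V} (hxy : G.Adj x y) (hlt : r x < r y) :
    (pathTwoGraph G).Adj (p x) y := by
  have hx : p x ≠ x := fun h => (htop x h (r y)).not_gt hlt
  refine ⟨fun h => ?_, x, (hadj x hx).symm, hxy⟩
  rw [← h, hr] at hlt
  exact lt_irrefl _ hlt

theorem ncard_edgeSet_diff_rankDiag_le (hp : Involutive p) [Finite V] :
    (G.edgeSet \ {z | (z.map r).IsDiag}).ncard ≤ (pathTwoGraph G).edgeSet.ncard := by
  refine Set.ncard_le_ncard_of_injOn (rankTransfer p r) ?_ ?_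
  · rintro z ⟨hz, hdiag⟩
    obtain ⟨x, y, rfl, hxy⟩ := Sym2.exists_eq_mk_lt_of_not_isDiag_map hdiag
    rw [rankTransfer_mk_of_lt hxy]
    exact pathTwoGraph_adj_of_rank_lt hadj hr htop hz hxy
  · rintro z ⟨-, hz⟩ w ⟨-, hw⟩ h
    obtain ⟨x, y, rfl, hxy⟩ := Sym2.exists_eq_mk_lt_of_not_isDiag_map hz
    obtain ⟨u, v, rfl, huv⟩ := Sym2.exists_eq_mk_lt_of_not_isDiag_map hw
    rw [rankTransfer_mk_of_lt hxy, rankTransfer_mk_of_lt huv, Sym2.eq_iff] at h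
    rcases h with ⟨hxu, rfl⟩ | ⟨hxv, hyu⟩
    · rw [hp.injective hxu]
    · -- `xy` and `uv = y'x'` would be oriented oppositely
      have hxv' : r x = r v := by rw [← hr x, hxv]
      have hyu' : r y = r u := by rw [hyu, hr u]
      refine absurd ?_ (lt_irrefl (r x))
      calc
        r x < r y := hxy
        _ = r u := hyu'
        _ < r v := huv
        _ = r x := hxv'.symm

end RankTransfer

section MatchRank

variable {V β : Type*} [LinearOrder β] {f : V → β} {p : V → V}

open Classical in
noncomputable def matchRank (f : V → β) (p : V → V) (v : V) : WithTop β :=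
  if p v = v then ⊤ else ↑(min (f v) (f (p v)))

theorem matchRank_apply_apply (hp : Involutive p) (v : V) :
    matchRank f p (p v) = matchRank f p v := by
  by_cases hv : p v = v
  · simp [matchRank, hv]
  · simp [matchRank, hv, Ne.symm hv, hp v, min_comm]

theorem isTop_matchRank {v : V} (hv : p v = v) : IsTop (matchRank f p v) := by
  simp [matchRank, hv]

theorem eq_or_eq_of_matchRank_eq (hf : Injective f) (hp : Involutive p) {x y : V} (hx : p x ≠ x)
    (h : matchRank f p x = matchRank f p y) : y = x ∨ y = p x := by
  have hy : p y ≠ y := fun hy => by simp [matchRank, hx, hy] at h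
  simp only [matchRank, hx, hy, if_false, WithTop.coe_inj] at h
  rcases min_choice (f x) (f (p x)) with h1 | h1 <;>
    rcases min_choice (f y) (f (p y)) with h2 | h2 <;> rw [h1, h2] at h <;> have h := hf h
  · exact .inl h.symm
  · exact .inr (hp.eq_iff.mp h.symm)
  · exact .inr h.symm
  · exact .inl (hp.injective h).symm

theorem edgeSet_inter_matchRankDiag_subset (hf : Injective f) (hp : Involutive p)
    {G : SimpleGraph V} (hcover : ∀ x y, G.Adj x y → p x ≠ x ∨ p y ≠ y) :
    G.edgeSet ∩ {z | (z.map (matchRank f p)).IsDiag} ⊆ {z | ∃ v, p v ≠ v ∧ z = s(v, p v)} := by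
  rintro z ⟨hz, hdiag⟩
  induction z using Sym2.ind with
  | _ x y =>
    rw [SimpleGraph.mem_edgeSet] at hz
    rw [Set.mem_ofPred_eq, Sym2.map_mk, Sym2.mk_isDiag_iff] at hdiag
    rcases hcover x y hz with hx | hy
    · rcases eq_or_eq_of_matchRank_eq hf hp hx hdiag with rfl | rfl
      · exact absurd hz (G.loopless.irrefl _)
      · exact ⟨x, hx, rfl⟩
    · rcases eq_or_eq_of_matchRank_eq hf hp hy hdiag.symm with rfl | rfl
      · exact absurd hz (G.loopless.irrefl _)
      · exact ⟨y, hy, Sym2.eq_swap⟩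

end MatchRank

section Partner

variable {V : Type*} [DecidableEq V] {G : SimpleGraph V} {M : Finset (Finset V)}

open Classical in
noncomputable def partner (M : Finset (Finset V)) (v : V) : V :=
  if h : ∃ u, ({v, u} : Finset V) ∈ M then h.choose else v

theorem pair_partner_mem_of_exists {v : V} (h : ∃ u, ({v, u} : Finset V) ∈ M) :
    ({v, partner M v} : Finset V) ∈ M := by
  rw [partner, dif_pos h]
  exact h.choose_spec

theorem pair_partner_mem {v : V} (hv : partner M v ≠ v) : ({v, partner M v} : Finset V) ∈ M :=
  pair_partner_mem_of_exists (not_not.mp fun h => hv (dif_neg h))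

theorem ncard_partnerEdges_le :
    {z : Sym2 V | ∃ v, partner M v ≠ v ∧ z = s(v, partner M v)}.ncard ≤ M.card := by
  rw [← Set.ncard_coe_finset]
  refine Set.ncard_le_ncard_of_injOn Sym2.toFinset ?_ Sym2.toFinset_injective.injOn
  rintro _ ⟨v, hv, rfl⟩
  rw [Sym2.toFinset_mk_eq]
  exact pair_partner_mem hv

variable (hedge : ∀ e ∈ M, ∃ x y : V, e = ({x, y} : Finset V) ∧ G.Adj x y)
include hedge

theorem adj_of_pair_mem {x y : V} (h : ({x, y} : Finset V) ∈ M) : G.Adj x y := by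
  obtain ⟨a, b, hab, hadj⟩ := hedge _ h
  have : s(x, y) = s(a, b) := Sym2.toFinset_injective (by simpa [Sym2.toFinset_mk_eq] using hab)
  rwa [← SimpleGraph.mem_edgeSet, this]

theorem partner_ne_of_exists {v : V} (h : ∃ u, ({v, u} : Finset V) ∈ M) : partner M v ≠ v :=
  (adj_of_pair_mem hedge (pair_partner_mem_of_exists h)).ne.symm

theorem partner_ne_of_mem_biUnion {v : V} (hv : v ∈ M.biUnion id) : partner M v ≠ v := by
  obtain ⟨e, he, hve⟩ := Finset.mem_biUnion.mp hv
  obtain ⟨a, b, rfl, -⟩ := hedge e he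
  refine partner_ne_of_exists hedge ?_
  rcases Finset.mem_insert.mp hve with rfl | hvb
  · exact ⟨b, he⟩
  · rw [Finset.mem_singleton.mp hvb]
    exact ⟨a, Finset.pair_comm a b ▸ he⟩

theorem partner_adj {v : V} (hv : partner M v ≠ v) : G.Adj v (partner M v) :=
  adj_of_pair_mem hedge (pair_partner_mem hv)

theorem partner_eq_of_pair_mem (hdisj : ∀ e ∈ M, ∀ e' ∈ M, e ≠ e' → Disjoint e e') {v u : V}
    (h : ({v, u} : Finset V) ∈ M) : partner M v = u := by
  have hv : partner M v ≠ v := partner_ne_of_exists hedge ⟨u, h⟩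
  have hpair : ({v, partner M v} : Finset V) = {v, u} := by
    by_contra hne
    exact Finset.disjoint_left.mp (hdisj _ (pair_partner_mem hv) _ h hne)
      (Finset.mem_insert_self _ _) (Finset.mem_insert_self _ _)
  exact Sym2.congr_right.mp (Sym2.toFinset_injective (by simpa [Sym2.toFinset_mk_eq] using hpair))

theorem partner_involutive (hdisj : ∀ e ∈ M, ∀ e' ∈ M, e ≠ e' → Disjoint e e') :
    Involutive (partner M) := fun v => by
  by_cases hv : partner M v = v
  · rw [hv, hv]
  · exact partner_eq_of_pair_mem hedge hdisj (Finset.pair_comm v _ ▸ pair_partner_mem hv)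

end Partner

/-- If {e_1, ..., e_ℓ} is a maximal matching of G (pairwise disjoint edges such that
the uncovered vertices form an independent set), then |E(T(G))| ≥ |E(G)| − ℓ. -/
theorem pathTwo_edge_bound_matching {V : Type*} [Fintype V] [DecidableEq V]
    (G : SimpleGraph V) (M : Finset (Finset V))
    (hedge : ∀ e ∈ M, ∃ x y : V, e = ({x, y} : Finset V) ∧ G.Adj x y)
    (hdisj : ∀ e ∈ M, ∀ e' ∈ M, e ≠ e' → Disjoint e e')
    (hmax : ∀ x y : V, G.Adj x y → x ∈ M.biUnion id ∨ y ∈ M.biUnion id) :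
    G.edgeSet.ncard - M.card ≤ (pathTwoGraph G).edgeSet.ncard := by
  set p := partner M
  set r := matchRank (Fintype.equivFin V) p
  have hp : Involutive p := partner_involutive hedge hdisj
  have hcover : ∀ x y, G.Adj x y → p x ≠ x ∨ p y ≠ y := fun x y hxy =>
    (hmax x y hxy).imp (partner_ne_of_mem_biUnion hedge) (partner_ne_of_mem_biUnion hedge)
  have hT : (G.edgeSet \ {z | (z.map r).IsDiag}).ncard ≤ (pathTwoGraph G).edgeSet.ncard :=
    ncard_edgeSet_diff_rankDiag_le (fun _ => partner_adj hedge) (matchRank_apply_apply hp)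
      (fun _ => isTop_matchRank) hp
  have hM : (G.edgeSet ∩ {z | (z.map r).IsDiag}).ncard ≤ M.card :=
    (Set.ncard_le_ncard (edgeSet_inter_matchRankDiag_subset (Fintype.equivFin V).injective hp
      hcover)).trans ncard_partnerEdges_le
  have hsplit := Set.ncard_inter_add_ncard_sdiff_eq_ncard G.edgeSet {z | (z.map r).IsDiag}
  omega
end
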